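/- Let ψ(x) = 1/(1 + e^{−x}), let ū > 0, let N be a positive integer, and let a₁, …, a_N be nonnegative reals. Let c > 0 be such that for every i, either aᵢ = 0 or aᵢ ≥ c. Then for every u ∈ [−ū, ū]^N: Σ_{i=1}^N (ψ′(uᵢ)·aᵢ)² ≥ c·ψ(ū)(1 − ψ(ū))²·Σ_{i=1}^N ψ(uᵢ)·aᵢ. -/

import Mathlib

/-- The sigmoid function `ψ(x) = 1/(1 + e^{-x})`. -/
noncomputable def sigmoid : ℝ → ℝ := fun x => 1 / (1 + Real.exp (-x))

/-! The inequality holds term by term. Since `ψ' = ψ(1 - ψ)`, the `i`-th term on the right is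
`ψ(uᵢ) · ψ(uᵢ)(1 - ψ(uᵢ))² · aᵢ²`; the factor `ψ(1 - ψ)²` is minimal over `[-ū, ū]` at `ū`
(because `ψ(-x) = 1 - ψ(x)`), and `c aᵢ ≤ aᵢ²` because `aᵢ` is `0` or at least `c`. -/

theorem sigmoid_eq_real_sigmoid : sigmoid = Real.sigmoid :=
  funext fun _ => one_div _

theorem mul_le_sq_of_eq_zero_or_le {a c : ℝ} (ha : 0 ≤ a) (hca : a = 0 ∨ c ≤ a) :
    c * a ≤ a ^ 2 := by
  rcases hca with rfl | hcle
  · simp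
  · rw [sq]
    exact mul_le_mul_of_nonneg_right hcle ha

namespace Real

theorem sigmoid_mul_one_sub_sigmoid_sq_le_of_abs_le {x y : ℝ} (h : |x| ≤ y) :
    sigmoid y * (1 - sigmoid y) ^ 2 ≤ sigmoid x * (1 - sigmoid x) ^ 2 := by
  obtain ⟨hyx, hxy⟩ := abs_le.1 h
  have h_upper : sigmoid x ≤ sigmoid y := sigmoid_le hxy
  have h_lower : 1 - sigmoid y ≤ sigmoid x := sigmoid_neg y ▸ sigmoid_le hyx
  -- `ψ(x)(1 - ψ(x)) - ψ(y)(1 - ψ(y)) = (ψ(y) - ψ(x))(ψ(y) + ψ(x) - 1)`, both factors `≥ 0`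
  have h_deriv_le : sigmoid y * (1 - sigmoid y) ≤ sigmoid x * (1 - sigmoid x) := by
    nlinarith
  calc sigmoid y * (1 - sigmoid y) ^ 2
      = sigmoid y * (1 - sigmoid y) * (1 - sigmoid y) := by ring
    _ ≤ sigmoid x * (1 - sigmoid x) * (1 - sigmoid x) :=
        mul_le_mul h_deriv_le (by linarith) (by linarith [sigmoid_lt_one y])
          (mul_nonneg (sigmoid_nonneg x) (by linarith [sigmoid_lt_one x]))
    _ = sigmoid x * (1 - sigmoid x) ^ 2 := by ring

theorem mul_sigmoid_mul_le_sq_deriv_sigmoid_mul {x y a c : ℝ} (hxy : |x| ≤ y) (ha : 0 ≤ a)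
    (hca : a = 0 ∨ c ≤ a) :
    c * sigmoid y * (1 - sigmoid y) ^ 2 * (sigmoid x * a) ≤ (deriv sigmoid x * a) ^ 2 := by
  calc c * sigmoid y * (1 - sigmoid y) ^ 2 * (sigmoid x * a)
      = sigmoid y * (1 - sigmoid y) ^ 2 * sigmoid x * (c * a) := by ring
    _ ≤ sigmoid y * (1 - sigmoid y) ^ 2 * sigmoid x * a ^ 2 :=
        mul_le_mul_of_nonneg_left (mul_le_sq_of_eq_zero_or_le ha hca)
          (mul_nonneg (mul_nonneg (sigmoid_nonneg y) (sq_nonneg _)) (sigmoid_nonneg x))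
    _ ≤ sigmoid x * (1 - sigmoid x) ^ 2 * sigmoid x * a ^ 2 :=
        mul_le_mul_of_nonneg_right (mul_le_mul_of_nonneg_right
          (sigmoid_mul_one_sub_sigmoid_sq_le_of_abs_le hxy) (sigmoid_nonneg x)) (sq_nonneg a)
    _ = (deriv sigmoid x * a) ^ 2 := by rw [deriv_sigmoid]; ring

end Real

theorem stmt_8_general (ub : ℝ) (N : ℕ)
    (a : Fin N → ℝ) (ha : ∀ i, 0 ≤ a i)
    (c : ℝ) (hca : ∀ i, a i = 0 ∨ c ≤ a i)
    (u : Fin N → ℝ) (hu : ∀ i, u i ∈ Set.Icc (-ub) ub) :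
    c * sigmoid ub * (1 - sigmoid ub) ^ 2 * ∑ i, sigmoid (u i) * a i ≤
      ∑ i, (deriv sigmoid (u i) * a i) ^ 2 := by
  rw [Finset.mul_sum, sigmoid_eq_real_sigmoid]
  exact Finset.sum_le_sum fun i _ =>
    Real.mul_sigmoid_mul_le_sq_deriv_sigmoid_mul (abs_le.2 (hu i)) (ha i) (hca i)

/-- **PL-over-`u` estimate from the proof of Lemma 3 (data hyper-cleaning).**
For `ub > 0`, nonnegative weights `a i` each of which is either `0` or at least `c > 0`,
and `u ∈ [-ub, ub]^N`, one has
`Σᵢ (ψ'(uᵢ) aᵢ)² ≥ c ψ(ub)(1 - ψ(ub))² Σᵢ ψ(uᵢ) aᵢ`. -/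
theorem stmt_8 (ub : ℝ) (hub : 0 < ub) (N : ℕ) (hN : 0 < N)
    (a : Fin N → ℝ) (ha : ∀ i, 0 ≤ a i)
    (c : ℝ) (hc : 0 < c) (hca : ∀ i, a i = 0 ∨ c ≤ a i)
    (u : Fin N → ℝ) (hu : ∀ i, u i ∈ Set.Icc (-ub) ub) :
    c * sigmoid ub * (1 - sigmoid ub) ^ 2 * ∑ i, sigmoid (u i) * a i ≤
      ∑ i, (deriv sigmoid (u i) * a i) ^ 2 :=
  stmt_8_general ub N a ha c hca u hu
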